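/- Let (g, ·) be a commutative associative algebra over a field K, let D₁, D₂ : g → g be commuting derivations (D₁∘D₂ = D₂∘D₁), and equip g with the 3-Lie bracket ⟦x,y,z⟧ given by the 3×3 determinant (expanded with the multiplication of g) of the matrix with rows (x, y, z), (D₁x, D₁y, D₁z), (D₂x, D₂y, D₂z). If N : g → g is a Nijenhuis operator on the associative algebra (g, ·) satisfying N∘D₁ = D₁∘N and N∘D₂ = D₂∘N, then N is a Nijenhuis operator on the 3-Lie algebra (g, ⟦·,·,·⟧), i.e. ⟦Nx, Ny, Nz⟧ = N(⟦x,y,z⟧_N²) for all x, y, z ∈ g. -/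

import Mathlib

/-- `br` is a 3-Lie algebra bracket over `K`: trilinear, alternating (skew-symmetric)
and satisfying the Filippov identity. -/
def Is3LieBracket (K : Type*) [Field K] {A : Type*} [AddCommGroup A] [Module K A]
    (br : A → A → A → A) : Prop :=
  (∀ x₁ x₂ y z, br (x₁ + x₂) y z = br x₁ y z + br x₂ y z) ∧
  (∀ (c : K) (x y z : A), br (c • x) y z = c • br x y z) ∧
  (∀ x y₁ y₂ z, br x (y₁ + y₂) z = br x y₁ z + br x y₂ z) ∧
  (∀ (c : K) (x y z : A), br x (c • y) z = c • br x y z) ∧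
  (∀ x y z₁ z₂, br x y (z₁ + z₂) = br x y z₁ + br x y z₂) ∧
  (∀ (c : K) (x y z : A), br x y (c • z) = c • br x y z) ∧
  (∀ x y, br x x y = 0) ∧ (∀ x y, br x y y = 0) ∧ (∀ x y, br x y x = 0) ∧
  (∀ x y a b c, br x y (br a b c) = br (br x y a) b c + br a (br x y b) c + br a b (br x y c))

/-- `N` is a Nijenhuis operator on the 3-Lie algebra `(A, br)`:
`[Nx,Ny,Nz] = N([x,y,z]_N²)` where
`[x,y,z]_N¹ = [Nx,y,z] + [x,Ny,z] + [x,y,Nz] − N[x,y,z]` and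
`[x,y,z]_N² = [Nx,Ny,z] + [Nx,y,Nz] + [x,Ny,Nz] − N([x,y,z]_N¹)`. -/
def IsNijenhuis3 (K : Type*) [Field K] {A : Type*} [AddCommGroup A] [Module K A]
    (br : A → A → A → A) (N : A →ₗ[K] A) : Prop :=
  ∀ x y z : A,
    br (N x) (N y) (N z)
      = N (br (N x) (N y) z + br (N x) y (N z) + br x (N y) (N z)
          - N (br (N x) y z + br x (N y) z + br x y (N z) - N (br x y z)))

/-- The 3×3 determinant bracket with rows `(x,y,z)`, `(D₁x,D₁y,D₁z)`, `(D₂x,D₂y,D₂z)`,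
expanded with the multiplication of `A`. -/
def det2Bracket {K : Type*} [Field K] {A : Type*} [NonUnitalCommRing A] [Module K A]
    (D₁ D₂ : A →ₗ[K] A) (x y z : A) : A :=
  ∑ σ : Equiv.Perm (Fin 3),
    (Equiv.Perm.sign σ : ℤ) •
      ((![x, y, z]) (σ 0) * (D₁ ((![x, y, z]) (σ 1)) * D₂ ((![x, y, z]) (σ 2))))

/-! Read by columns, the determinant bracket is `∑_τ sign τ • d_{τ 0} x * (d_{τ 1} y * d_{τ 2} z)`
with `d = (id, D₁, D₂)`. Applying the associative Nijenhuis identity twice makes `N` a Nijenhuis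
operator for the ternary product `a * (b * c)`; this survives precomposing each slot with a map
commuting with `N`, and the Nijenhuis identity of a ternary bracket is additive in the bracket. -/

section Nijenhuis3

variable {K A : Type*} [Field K] [AddCommGroup A] [Module K A]

variable (K) in
def nijenhuis3Brackets (N : A →ₗ[K] A) : AddSubgroup (A → A → A → A) where
  carrier := {br | IsNijenhuis3 K br N}
  zero_mem' := by simp [IsNijenhuis3]
  add_mem' {br₁ br₂} h₁ h₂ x y z := by
    simp only [Pi.add_apply, h₁ x y z, h₂ x y z, map_add, map_sub]
    abel
  neg_mem' {br} h x y z := by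
    simp only [Pi.neg_apply, h x y z, map_neg, map_sub, map_add]
    abel

theorem mem_nijenhuis3Brackets {N : A →ₗ[K] A} {br : A → A → A → A} :
    br ∈ nijenhuis3Brackets K N ↔ IsNijenhuis3 K br N :=
  Iff.rfl

theorem IsNijenhuis3.comp {N : A →ₗ[K] A} {br : A → A → A → A} (h : IsNijenhuis3 K br N)
    {f g k : A → A} (hf : ∀ x, f (N x) = N (f x)) (hg : ∀ x, g (N x) = N (g x))
    (hk : ∀ x, k (N x) = N (k x)) :
    IsNijenhuis3 K (fun x y z => br (f x) (g y) (k z)) N := by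
  intro x y z
  simp only [hf, hg, hk]
  exact h (f x) (g y) (k z)

end Nijenhuis3

theorem isNijenhuis3_mul_mul {K A : Type*} [Field K] [NonUnitalNonAssocRing A] [Module K A]
    {N : A →ₗ[K] A} (hN : ∀ x y : A, N x * N y = N (N x * y + x * N y - N (x * y))) :
    IsNijenhuis3 K (fun a b c => a * (b * c)) N := by
  intro a b c
  beta_reduce
  rw [hN b c, hN a, ← hN b c]
  congr 1
  simp only [mul_add, mul_sub, hN a (b * c), map_add, map_sub]
  abel

theorem det2Bracket_eq_sum {K A : Type*} [Field K] [NonUnitalCommRing A] [Module K A]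
    (D₁ D₂ : A →ₗ[K] A) :
    det2Bracket D₁ D₂ = ∑ τ : Equiv.Perm (Fin 3), (Equiv.Perm.sign τ : ℤ) •
      fun x y z => ![LinearMap.id, D₁, D₂] (τ 0) x *
        (![LinearMap.id, D₁, D₂] (τ 1) y * ![LinearMap.id, D₁, D₂] (τ 2) z) := by
  have huniv : (Finset.univ : Finset (Equiv.Perm (Fin 3))) =
      {1, Equiv.swap 0 1, Equiv.swap 0 2, Equiv.swap 1 2,
        Equiv.swap 0 1 * Equiv.swap 1 2, Equiv.swap 0 2 * Equiv.swap 1 2} := by decide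
  funext x y z
  simp +decide [det2Bracket, Finset.sum_apply, huniv, Finset.sum_insert, Equiv.swap_apply_def]
  simp only [mul_comm, mul_left_comm]
  abel

theorem nijenhuis_on_two_derivations_threeLie_general
    {K : Type*} [Field K] {A : Type*} [NonUnitalCommRing A] [Module K A]
    (D₁ D₂ : A →ₗ[K] A)
    (N : A →ₗ[K] A)
    (hN : ∀ x y : A, N x * N y = N (N x * y + x * N y - N (x * y)))
    (hND₁ : ∀ x : A, N (D₁ x) = D₁ (N x))
    (hND₂ : ∀ x : A, N (D₂ x) = D₂ (N x)) :
    IsNijenhuis3 K (det2Bracket D₁ D₂) N := by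
  have hd : ∀ i x, ![LinearMap.id, D₁, D₂] i (N x) = N (![LinearMap.id, D₁, D₂] i x) := by
    intro i x
    fin_cases i <;> simp [hND₁, hND₂]
  rw [← mem_nijenhuis3Brackets, det2Bracket_eq_sum]
  exact AddSubgroup.sum_mem _ fun τ _ => AddSubgroup.zsmul_mem _
    ((isNijenhuis3_mul_mul hN).comp (hd _) (hd _) (hd _)) _

/-- Let `D₁, D₂` be commuting derivations of a commutative
associative algebra `(A, *)` over `K` and equip `A` with the determinant 3-Lie
bracket.  If `N` is a Nijenhuis operator on `(A, *)` commuting with `D₁` and `D₂`,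
then `N` is a Nijenhuis operator on this 3-Lie algebra. -/
theorem nijenhuis_on_two_derivations_threeLie
    {K : Type*} [Field K] {A : Type*} [NonUnitalCommRing A] [Module K A]
    [SMulCommClass K A A] [IsScalarTower K A A]
    (D₁ D₂ : A →ₗ[K] A)
    (hD₁ : ∀ x y : A, D₁ (x * y) = D₁ x * y + x * D₁ y)
    (hD₂ : ∀ x y : A, D₂ (x * y) = D₂ x * y + x * D₂ y)
    (hcomm : ∀ x : A, D₁ (D₂ x) = D₂ (D₁ x))
    (N : A →ₗ[K] A)
    (hN : ∀ x y : A, N x * N y = N (N x * y + x * N y - N (x * y)))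
    (hND₁ : ∀ x : A, N (D₁ x) = D₁ (N x))
    (hND₂ : ∀ x : A, N (D₂ x) = D₂ (N x)) :
    IsNijenhuis3 K (det2Bracket D₁ D₂) N :=
  nijenhuis_on_two_derivations_threeLie_general D₁ D₂ N hN hND₁ hND₂
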